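/- arXiv:math/0606712 — 4 statements merged into one kernel-verified Lean document; each statement's English description precedes it below -/
import Mathlib

section
/- Let p be an odd prime, e ≥ 1, n = p^e, 1 ≤ f ≤ e, and q = 1 + p^f. In G_f = ⟨g, h | g^n = h^n = 1, g⁻¹hg = h^q⟩, every element has order dividing n; that is, G_f has exponent n (equivalently, (g^i h^j)^n = 1 for all integers i, j). -/
/-- The relations for the group `G_f = ⟨g, h | g^n = h^n = 1, g⁻¹hg = h^q⟩`. -/
def fermatRels (n q : ℕ) : Set (FreeGroup (Fin 2)) :=
  {FreeGroup.of 0 ^ n, FreeGroup.of 1 ^ n,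
   (FreeGroup.of 0)⁻¹ * FreeGroup.of 1 * FreeGroup.of 0 * (FreeGroup.of 1 ^ q)⁻¹}

/-- The group `G_f` (with `n = p^e`, `q = 1 + p^f`). -/
abbrev Gf (n q : ℕ) := PresentedGroup (fermatRels n q)

/-- The generator `g` of `G_f`. -/
def gGen (n q : ℕ) : Gf n q := PresentedGroup.of 0

/-- The generator `h` of `G_f`. -/
def hGen (n q : ℕ) : Gf n q := PresentedGroup.of 1


/-!
Since `h g = g h^q`, products of elements `g^i h^j` (`i, j ≥ 0`) are again of this form, and as `g`
and `h` have finite order these elements exhaust `G_f`. Then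
`(g^i h^j)^n = g^(i n) h^(j (1 + r + ⋯ + r^(n-1)))` with `r = q^i ≡ 1 mod p`, and such a geometric
sum of length `p^e` is divisible by `p^e`: it is the sum of length `p^(e-1)` times
`1 + s + ⋯ + s^(p-1)` with `s ≡ 1 mod p`. The map `g ↦ 1, h ↦ 0` onto `ℤ/n` shows that `g` has
order exactly `n`.
-/

open Finset

section Semiconj

variable {G : Type*} [Group G] {a b : G} {q : ℕ}

theorem SemiconjBy.pow_left_of_pow (h : SemiconjBy a (b ^ q) b) (k m : ℕ) :
    SemiconjBy (a ^ k) (b ^ (q ^ k * m)) (b ^ m) := by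
  induction k generalizing m with
  | zero => simp
  | succ k ih =>
    rw [pow_succ, pow_succ', mul_assoc, pow_mul]
    exact (ih m).mul_left (h.pow_right _)

theorem SemiconjBy.pow_mul_pow_mul_pow_mul_pow (h : SemiconjBy a (b ^ q) b) (i j k l : ℕ) :
    a ^ i * b ^ j * (a ^ k * b ^ l) = a ^ (i + k) * b ^ (q ^ k * j + l) := by
  rw [mul_assoc, ← mul_assoc (b ^ j), ← (h.pow_left_of_pow k j).eq, pow_add, pow_add]
  group

theorem SemiconjBy.pow_mul_pow_pow (h : SemiconjBy a (b ^ q) b) (i j m : ℕ) :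
    (a ^ i * b ^ j) ^ m = a ^ (i * m) * b ^ (j * ∑ k ∈ range m, (q ^ i) ^ k) := by
  induction m with
  | zero => simp
  | succ m ih =>
    rw [pow_succ, ih, h.pow_mul_pow_mul_pow_mul_pow, geom_sum_succ]
    congr 2
    ring

theorem SemiconjBy.exists_pow_mul_pow_eq (h : SemiconjBy a (b ^ q) b) {x : G}
    (hx : x ∈ Submonoid.closure {a, b}) : ∃ i j : ℕ, a ^ i * b ^ j = x := by
  induction hx using Submonoid.closure_induction with
  | mem x hx =>
    rcases hx with rfl | rfl
    exacts [⟨1, 0, by simp⟩, ⟨0, 1, by simp⟩]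
  | one => exact ⟨0, 0, by simp⟩
  | mul x y _ _ hx hy =>
    obtain ⟨i, j, rfl⟩ := hx
    obtain ⟨k, l, rfl⟩ := hy
    exact ⟨_, _, (h.pow_mul_pow_mul_pow_mul_pow i j k l).symm⟩

theorem SemiconjBy.pow_mul_pow_pow_eq_one (h : SemiconjBy a (b ^ q) b) {n : ℕ} (ha : a ^ n = 1)
    (hb : b ^ n = 1) {i : ℕ} (hsum : n ∣ ∑ k ∈ range n, (q ^ i) ^ k) (j : ℕ) :
    (a ^ i * b ^ j) ^ n = 1 := by
  obtain ⟨c, hc⟩ := hsum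
  rw [h.pow_mul_pow_pow, hc, mul_comm i, mul_left_comm, pow_mul, pow_mul, ha, hb, one_pow, one_pow,
    one_mul]

end Semiconj

theorem geom_sum_range_mul {R : Type*} [CommSemiring R] (r : R) (m n : ℕ) :
    ∑ k ∈ range (m * n), r ^ k = (∑ k ∈ range m, r ^ k) * ∑ k ∈ range n, (r ^ m) ^ k := by
  induction n with
  | zero => simp
  | succ n ih =>
    rw [Nat.mul_succ, sum_range_add, ih, sum_range_succ, mul_add]
    simp only [pow_add, ← mul_sum, pow_mul]
    ring

theorem Nat.pow_dvd_geom_sum_of_modEq_one {p r : ℕ} (hr : r ≡ 1 [MOD p]) (e : ℕ) :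
    p ^ e ∣ ∑ k ∈ range (p ^ e), r ^ k := by
  induction e with
  | zero => simp
  | succ e ih =>
    rw [pow_succ, geom_sum_range_mul]
    refine mul_dvd_mul ih (Nat.modEq_zero_iff_dvd.mp ?_)
    calc ∑ k ∈ range p, (r ^ p ^ e) ^ k ≡ ∑ k ∈ range p, 1 [MOD p] :=
          Nat.ModEq.sum fun k _ => by simpa using (hr.pow (p ^ e)).pow k
      _ = p := by simp
      _ ≡ 0 [MOD p] := Nat.modEq_zero_iff_dvd.mpr dvd_rfl

section Presentation

variable (n q : ℕ)

theorem gGen_pow_self : gGen n q ^ n = 1 :=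
  PresentedGroup.one_of_mem (rels := fermatRels n q) (x := FreeGroup.of 0 ^ n) (by simp [fermatRels])

theorem hGen_pow_self : hGen n q ^ n = 1 :=
  PresentedGroup.one_of_mem (rels := fermatRels n q) (x := FreeGroup.of 1 ^ n) (by simp [fermatRels])

theorem semiconjBy_gGen_hGen : SemiconjBy (gGen n q) (hGen n q ^ q) (hGen n q) := by
  have hrel := PresentedGroup.one_of_mem (rels := fermatRels n q)
    (x := (FreeGroup.of 0)⁻¹ * FreeGroup.of 1 * FreeGroup.of 0 * (FreeGroup.of 1 ^ q)⁻¹)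
    (by simp [fermatRels])
  have hc : (gGen n q)⁻¹ * hGen n q * gGen n q = hGen n q ^ q := mul_inv_eq_one.mp hrel
  rw [SemiconjBy, ← hc]
  group

theorem closure_gGen_hGen : Subgroup.closure {gGen n q, hGen n q} = ⊤ := by
  rw [← PresentedGroup.closure_range_of]
  congr
  ext
  simp [Fin.exists_fin_two, gGen, hGen, eq_comm]

theorem exists_gGen_pow_mul_hGen_pow_eq (hn : 0 < n) (x : Gf n q) :
    ∃ i j : ℕ, gGen n q ^ i * hGen n q ^ j = x := by
  refine (semiconjBy_gGen_hGen n q).exists_pow_mul_pow_eq ?_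
  have hfin : ∀ y ∈ ({gGen n q, hGen n q} : Set (Gf n q)), IsOfFinOrder y := by
    rintro y (rfl | rfl)
    exacts [isOfFinOrder_iff_pow_eq_one.mpr ⟨n, hn, gGen_pow_self n q⟩,
      isOfFinOrder_iff_pow_eq_one.mpr ⟨n, hn, hGen_pow_self n q⟩]
  rw [← Subgroup.closure_toSubmonoid_of_isOfFinOrder hfin, Subgroup.mem_toSubmonoid,
    closure_gGen_hGen]
  trivial

theorem orderOf_gGen : orderOf (gGen n q) = n := by
  refine Nat.dvd_antisymm (orderOf_dvd_of_pow_eq_one (gGen_pow_self n q)) ?_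
  let φ : Gf n q →* Multiplicative (ZMod n) :=
    PresentedGroup.toGroup (f := ![Multiplicative.ofAdd 1, 1]) (by
      intro r hr
      simp only [fermatRels, Set.mem_insert_iff, Set.mem_singleton_iff] at hr
      rcases hr with rfl | rfl | rfl <;> simp [← ofAdd_nsmul])
  have hφ : φ (gGen n q) = Multiplicative.ofAdd 1 := PresentedGroup.toGroup.of _
  simpa [hφ, orderOf_ofAdd_eq_addOrderOf] using orderOf_map_dvd φ (gGen n q)

end Presentation

theorem stmt4_general (p e f : ℕ) (hp : p.Prime) (hf1 : 1 ≤ f) (n : ℕ) (hn : n = p ^ e) (q : ℕ)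
    (hq : q = 1 + p ^ f) :
    (∀ x : Gf n q, x ^ n = 1) ∧
    Monoid.exponent (Gf n q) = n ∧
    (∀ i j : ℤ, (gGen n q ^ i * hGen n q ^ j) ^ n = 1) := by
  have hq1 : q ≡ 1 [MOD p] := by
    simpa [hq] using (Nat.modEq_zero_iff_dvd.mpr (dvd_pow_self p (by omega : f ≠ 0))).add_left 1
  have hpow : ∀ x : Gf n q, x ^ n = 1 := by
    intro x
    obtain ⟨i, j, rfl⟩ := exists_gGen_pow_mul_hGen_pow_eq n q (hn ▸ pow_pos hp.pos e) x
    refine (semiconjBy_gGen_hGen n q).pow_mul_pow_pow_eq_one (gGen_pow_self n q)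
      (hGen_pow_self n q) ?_ j
    simpa [hn] using Nat.pow_dvd_geom_sum_of_modEq_one (by simpa using hq1.pow i) e
  refine ⟨hpow, ?_, fun i j => hpow _⟩
  exact Nat.dvd_antisymm (Monoid.exponent_dvd_of_forall_pow_eq_one hpow)
    ((orderOf_gGen n q).symm.dvd.trans (Monoid.order_dvd_exponent _))

theorem stmt4 (p e f : ℕ) (hp : p.Prime) (hodd : Odd p) (he : 1 ≤ e)
    (hf1 : 1 ≤ f) (hfe : f ≤ e) (n : ℕ) (hn : n = p ^ e) (q : ℕ) (hq : q = 1 + p ^ f) :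
    (∀ x : Gf n q, x ^ n = 1) ∧
    Monoid.exponent (Gf n q) = n ∧
    (∀ i j : ℤ, (gGen n q ^ i * hGen n q ^ j) ^ n = 1) :=
  stmt4_general p e f hp hf1 n hn q hq
end

section
/- Let p be an odd prime, e ≥ 1, n = p^e, 1 ≤ f ≤ e. Two elements x = g^u h^s and y = g^v h^t of G_f = ⟨g, h | g^n = h^n = 1, g⁻¹hg = h^(1+p^f)⟩ generate G_f if and only if ut - vs is not divisible by p. -/
namespace FermatStmt6

variable {n q : ℕ}

lemma mk_rel {r : FreeGroup (Fin 2)} (hr : r ∈ fermatRels n q) :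
    PresentedGroup.mk (fermatRels n q) r = 1 :=
  (QuotientGroup.eq_one_iff r).mpr (Subgroup.subset_normalClosure hr)

lemma g_pow_n : gGen n q ^ n = 1 := by
  have := mk_rel (n := n) (q := q) (Set.mem_insert _ _)
  rwa [map_pow] at this

lemma h_pow_n : hGen n q ^ n = 1 := by
  have := mk_rel (n := n) (q := q) (Set.mem_insert_of_mem _ (Set.mem_insert _ _))
  rwa [map_pow] at this

lemma conj_rel : (gGen n q)⁻¹ * hGen n q * gGen n q = hGen n q ^ q := by
  have := mk_rel (n := n) (q := q)
    (Set.mem_insert_of_mem _ (Set.mem_insert_of_mem _ rfl))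
  rw [map_mul, map_mul, map_mul, map_inv, map_inv, map_pow, mul_inv_eq_one] at this
  exact this

lemma swap1 (j : ℕ) : hGen n q ^ j * gGen n q = gGen n q * hGen n q ^ (q * j) := by
  have h1 : (gGen n q)⁻¹ * hGen n q ^ j * gGen n q = hGen n q ^ (q * j) := by
    have : (gGen n q)⁻¹ * hGen n q ^ j * ((gGen n q)⁻¹)⁻¹ =
        ((gGen n q)⁻¹ * hGen n q * ((gGen n q)⁻¹)⁻¹) ^ j := (conj_pow).symm
    rw [inv_inv] at this
    rw [this, conj_rel, ← pow_mul', mul_comm j q]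
  calc hGen n q ^ j * gGen n q
      = gGen n q * ((gGen n q)⁻¹ * hGen n q ^ j * gGen n q) := by group
    _ = gGen n q * hGen n q ^ (q * j) := by rw [h1]

lemma swap (j k : ℕ) : hGen n q ^ j * gGen n q ^ k = gGen n q ^ k * hGen n q ^ (j * q ^ k) := by
  induction k with
  | zero => simp
  | succ k ih =>
      rw [pow_succ, ← mul_assoc, ih, mul_assoc, swap1, ← mul_assoc, ← pow_succ]
      ring_nf

lemma arith_aux {j : ℕ} (hn : n ≠ 0) : j + j * (n - 1) = j * n := by
  cases n with
  | zero => exact absurd rfl hn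
  | succ m => simp [Nat.mul_succ]; ring

lemma inv_aux {G : Type*} [Group G] {x : G} (hn : n ≠ 0) (hx : x ^ n = 1) (j : ℕ) :
    (x ^ j)⁻¹ = x ^ (j * (n - 1)) := by
  apply inv_eq_of_mul_eq_one_right
  rw [← pow_add, arith_aux hn, pow_mul', hx, one_pow]

lemma normal_form (hn : n ≠ 0) (x : Gf n q) :
    ∃ i j : ℕ, x = gGen n q ^ i * hGen n q ^ j := by
  let S : Subgroup (Gf n q) :=
    { carrier := {x | ∃ i j : ℕ, x = gGen n q ^ i * hGen n q ^ j}
      one_mem' := ⟨0, 0, by simp⟩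
      mul_mem' := by
        rintro a b ⟨i, j, rfl⟩ ⟨k, l, rfl⟩
        refine ⟨i + k, j * q ^ k + l, ?_⟩
        rw [mul_assoc, ← mul_assoc (hGen n q ^ j), swap, pow_add, pow_add]
        group
      inv_mem' := by
        rintro a ⟨i, j, rfl⟩
        refine ⟨i * (n - 1), j * (n - 1) * q ^ (i * (n - 1)), ?_⟩
        rw [mul_inv_rev, inv_aux hn g_pow_n, inv_aux hn h_pow_n, swap] }
  have : ∀ z : Gf n q, z ∈ S := by
    intro z
    apply PresentedGroup.generated_by
    intro j
    fin_cases j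
    · exact ⟨1, 0, by simp [gGen]⟩
    · exact ⟨0, 1, by simp [hGen]⟩
  exact this x

lemma finite_Gf (hn : n ≠ 0) : Finite (Gf n q) := by
  have hpos : 0 < n := Nat.pos_of_ne_zero hn
  apply Finite.of_surjective
    (fun ij : Fin n × Fin n => gGen n q ^ (ij.1 : ℕ) * hGen n q ^ (ij.2 : ℕ))
  intro x
  obtain ⟨i, j, rfl⟩ := normal_form hn x
  refine ⟨(⟨i % n, Nat.mod_lt _ hpos⟩, ⟨j % n, Nat.mod_lt _ hpos⟩), ?_⟩
  simp only []
  rw [← pow_eq_pow_mod i g_pow_n, ← pow_eq_pow_mod j h_pow_n]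
lemma zpow_to_npow {G : Type*} [Group G] {x : G} (hn : n ≠ 0) (hx : x ^ n = 1) (m : ℤ) :
    ∃ j : ℕ, x ^ m = x ^ j := by
  have hn' : (n : ℤ) ≠ 0 := by exact_mod_cast hn
  refine ⟨(m % n).toNat, ?_⟩
  conv_lhs => rw [← Int.mul_ediv_add_emod m n]
  rw [zpow_add, zpow_mul, zpow_natCast, hx, one_zpow, one_mul,
    ← zpow_natCast, Int.toNat_of_nonneg (Int.emod_nonneg m hn')]

lemma normal_zpowers (hn : n ≠ 0) : (Subgroup.zpowers (hGen n q)).Normal := by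
  constructor
  intro z hz x
  obtain ⟨m, rfl⟩ := Subgroup.mem_zpowers_iff.mp hz
  obtain ⟨j, hj⟩ := zpow_to_npow hn (h_pow_n (n := n) (q := q)) m
  obtain ⟨i, k, rfl⟩ := normal_form hn x
  rw [hj, mul_inv_rev, inv_aux hn h_pow_n, inv_aux hn g_pow_n]
  have key : (gGen n q ^ i * hGen n q ^ k) * hGen n q ^ j *
      (hGen n q ^ (k * (n - 1)) * gGen n q ^ (i * (n - 1))) =
      gGen n q ^ i * (hGen n q ^ (k + j + k * (n - 1)) * gGen n q ^ (i * (n - 1))) := by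
    rw [pow_add, pow_add]
    group
  rw [key, swap, ← mul_assoc, ← pow_add, arith_aux hn, pow_mul', g_pow_n, one_pow, one_mul]
  exact Subgroup.mem_zpowers_iff.mpr ⟨((k + j + k * (n - 1)) * q ^ (i * (n - 1)) : ℕ),
    by rw [zpow_natCast]⟩

lemma isPGroup_Gf {p e : ℕ} (hp : p.Prime) (hne : n = p ^ e) : IsPGroup p (Gf n q) := by
  haveI : Fact p.Prime := ⟨hp⟩
  have hn : n ≠ 0 := by subst hne; exact (pow_pos hp.pos e).ne'
  haveI := finite_Gf (n := n) (q := q) hn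
  haveI := normal_zpowers (n := n) (q := q) hn
  set N := Subgroup.zpowers (hGen n q) with hN
  set π := QuotientGroup.mk' N with hπ
  have hcardN : Nat.card N = orderOf (hGen n q) := Nat.card_zpowers _
  have hdvdN : orderOf (hGen n q) ∣ n := orderOf_dvd_of_pow_eq_one h_pow_n
  have htop : Subgroup.zpowers (π (gGen n q)) = ⊤ := by
    rw [Subgroup.eq_top_iff']
    intro y
    obtain ⟨z, rfl⟩ := QuotientGroup.mk'_surjective N y
    obtain ⟨i, j, rfl⟩ := normal_form hn z
    rw [map_mul, map_pow, map_pow]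
    have h1 : π (hGen n q) = 1 := (QuotientGroup.eq_one_iff _).mpr (Subgroup.mem_zpowers _)
    rw [h1, one_pow, mul_one]
    exact Subgroup.mem_zpowers_iff.mpr ⟨(i : ℤ), by rw [zpow_natCast]⟩
  have hcardQ : Nat.card (Gf n q ⧸ N) = orderOf (π (gGen n q)) := by
    rw [← Nat.card_zpowers, htop, Subgroup.card_top]
  have hdvdQ : orderOf (π (gGen n q)) ∣ n :=
    orderOf_dvd_of_pow_eq_one (by rw [← map_pow, g_pow_n, map_one])
  rw [IsPGroup.iff_card]
  have h1 : orderOf (π (gGen n q)) ∣ p ^ e := by rw [← hne]; exact hdvdQ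
  have h2 : orderOf (hGen n q) ∣ p ^ e := by rw [← hne]; exact hdvdN
  obtain ⟨a, -, ha⟩ := (Nat.dvd_prime_pow hp).mp h1
  obtain ⟨b, -, hb⟩ := (Nat.dvd_prime_pow hp).mp h2
  exact ⟨a + b, by
    rw [Subgroup.card_eq_card_quotient_mul_card_subgroup N, hcardQ, hcardN, ha, hb, pow_add]⟩
lemma char_exists (p : ℕ) (hpn : (n : ZMod p) = 0) (hq1 : (q : ZMod p) = 1)
    (a b : ZMod p) :
    ∃ ψ : Gf n q →* Multiplicative (ZMod p),
      ψ (gGen n q) = Multiplicative.ofAdd a ∧ ψ (hGen n q) = Multiplicative.ofAdd b := by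
  have hrels : ∀ r ∈ fermatRels n q,
      FreeGroup.lift (![Multiplicative.ofAdd a, Multiplicative.ofAdd b]) r = 1 := by
    intro r hr
    rcases hr with rfl | rfl | rfl
    · rw [map_pow, FreeGroup.lift_apply_of]
      show Multiplicative.ofAdd a ^ n = 1
      rw [← ofAdd_nsmul, nsmul_eq_mul, hpn, zero_mul]
      rfl
    · rw [map_pow, FreeGroup.lift_apply_of]
      show Multiplicative.ofAdd b ^ n = 1
      rw [← ofAdd_nsmul, nsmul_eq_mul, hpn, zero_mul]
      rfl
    · rw [map_mul, map_mul, map_mul, map_inv, map_inv, map_pow,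
        FreeGroup.lift_apply_of, FreeGroup.lift_apply_of]
      show (Multiplicative.ofAdd a)⁻¹ * Multiplicative.ofAdd b * Multiplicative.ofAdd a *
        ((Multiplicative.ofAdd b) ^ q)⁻¹ = 1
      rw [← ofAdd_nsmul, nsmul_eq_mul, hq1, one_mul, ← ofAdd_neg, ← ofAdd_neg,
        ← ofAdd_add, ← ofAdd_add, ← ofAdd_add]
      have : -a + b + a + -b = 0 := by ring
      rw [this]
      rfl
  refine ⟨PresentedGroup.toGroup hrels, ?_, ?_⟩
  · show PresentedGroup.toGroup hrels (PresentedGroup.of 0) = _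
    rw [PresentedGroup.toGroup.of]
    simp
  · show PresentedGroup.toGroup hrels (PresentedGroup.of 1) = _
    rw [PresentedGroup.toGroup.of]
    simp
end FermatStmt6

open FermatStmt6 in
theorem stmt6 (p e f : ℕ) (hp : p.Prime) (hodd : Odd p) (he : 1 ≤ e)
    (hf1 : 1 ≤ f) (hfe : f ≤ e) (n : ℕ) (hn : n = p ^ e) (q : ℕ) (hq : q = 1 + p ^ f)
    (u s v t : ℤ) :
    Subgroup.closure {gGen n q ^ u * hGen n q ^ s, gGen n q ^ v * hGen n q ^ t} = ⊤ ↔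
      ¬ (p : ℤ) ∣ (u * t - v * s) := by
  haveI : Fact p.Prime := ⟨hp⟩
  set g := gGen n q with hg
  set h := hGen n q with hh
  set x := g ^ u * h ^ s with hx
  set y := g ^ v * h ^ t with hy
  have hn0 : n ≠ 0 := by rw [hn]; exact (pow_pos hp.pos e).ne'
  have hpn : (n : ZMod p) = 0 := by
    rw [hn]; push_cast; rw [ZMod.natCast_self]; exact zero_pow (by omega)
  have hq1 : (q : ZMod p) = 1 := by
    rw [hq]; push_cast; rw [ZMod.natCast_self, zero_pow (by omega), add_zero]
  constructor
  · -- closure = ⊤ → ¬ p ∣ det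
    intro hcl hdvd
    have det0 : (u : ZMod p) * t - v * s = 0 := by
      have := (ZMod.intCast_zmod_eq_zero_iff_dvd _ p).mpr hdvd
      push_cast at this
      linear_combination this
    obtain ⟨a, b, hab, e1, e2⟩ : ∃ a b : ZMod p, ¬(a = 0 ∧ b = 0) ∧
        (u : ZMod p) * a + s * b = 0 ∧ (v : ZMod p) * a + t * b = 0 := by
      by_cases h1 : (t : ZMod p) = 0 ∧ (v : ZMod p) = 0
      · by_cases h2 : (s : ZMod p) = 0 ∧ (u : ZMod p) = 0
        · exact ⟨1, 0, by simp, by rw [h2.1, h2.2]; ring, by rw [h1.1, h1.2]; ring⟩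
        · exact ⟨s, -u, fun hc => h2 ⟨hc.1, neg_eq_zero.mp hc.2⟩,
            by ring, by rw [h1.1, h1.2]; ring⟩
      · exact ⟨t, -v, fun hc => h1 ⟨hc.1, neg_eq_zero.mp hc.2⟩,
          by linear_combination det0, by ring⟩
    obtain ⟨ψ, hψg, hψh⟩ := char_exists (n := n) (q := q) p hpn hq1 a b
    have kill : ∀ z ∈ ({x, y} : Set (Gf n q)), z ∈ ψ.ker := by
      rintro z (rfl | rfl)
      · have hev : ψ x = Multiplicative.ofAdd ((u : ZMod p) * a + s * b) := by
          rw [hx, map_mul, map_zpow, map_zpow, hψg, hψh, ← ofAdd_zsmul, ← ofAdd_zsmul,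
            ← ofAdd_add, zsmul_eq_mul, zsmul_eq_mul]
        rw [MonoidHom.mem_ker, hev, e1]
        rfl
      · have hev : ψ y = Multiplicative.ofAdd ((v : ZMod p) * a + t * b) := by
          rw [hy, map_mul, map_zpow, map_zpow, hψg, hψh, ← ofAdd_zsmul, ← ofAdd_zsmul,
            ← ofAdd_add, zsmul_eq_mul, zsmul_eq_mul]
        rw [MonoidHom.mem_ker, hev, e2]
        rfl
    have htop : (⊤ : Subgroup (Gf n q)) ≤ ψ.ker := by
      rw [← hcl]
      exact (Subgroup.closure_le _).mpr kill
    have ha : a = 0 := by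
      have := htop (Subgroup.mem_top g)
      rw [MonoidHom.mem_ker, hψg] at this
      exact ofAdd_eq_one.mp this
    have hb : b = 0 := by
      have := htop (Subgroup.mem_top h)
      rw [MonoidHom.mem_ker, hψh] at this
      exact ofAdd_eq_one.mp this
    exact hab ⟨ha, hb⟩
  · -- ¬ p ∣ det → closure = ⊤
    intro hdet
    by_contra hne
    haveI : Finite (Gf n q) := finite_Gf hn0
    have hpG : IsPGroup p (Gf n q) := isPGroup_Gf hp hn
    haveI : Group.IsNilpotent (Gf n q) := hpG.isNilpotent
    rcases eq_top_or_exists_le_coatom (Subgroup.closure ({x, y} : Set (Gf n q))) with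
      hc | ⟨M, hM, hHM⟩
    · exact hne hc
    haveI : M.Normal :=
      Subgroup.NormalizerCondition.normal_of_coatom M normalizerCondition_of_isNilpotent hM
    set π := QuotientGroup.mk' M with hπ
    have hQp : IsPGroup p (Gf n q ⧸ M) := hpG.to_quotient M
    haveI : Nontrivial (Gf n q ⧸ M) := by
      have hnall : ¬ ∀ z : Gf n q, z ∈ M := fun hall =>
        hM.1 ((Subgroup.eq_top_iff' M).mpr hall)
      push_neg at hnall
      obtain ⟨z, hz⟩ := hnall
      exact ⟨π z, 1, fun hcon => hz ((QuotientGroup.eq_one_iff z).mp hcon)⟩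
    obtain ⟨k, hk0, hkcard⟩ := (IsPGroup.nontrivial_iff_card hQp).mp inferInstance
    obtain ⟨c, hc⟩ := exists_prime_orderOf_dvd_card' (G := Gf n q ⧸ M) p
      (by rw [hkcard]; exact dvd_pow_self p (by omega))
    have hMK : M < Subgroup.comap π (Subgroup.zpowers c) := by
      refine lt_of_le_of_ne ?_ ?_
      · intro m hm
        have hm1 : π m = 1 := (QuotientGroup.eq_one_iff m).mpr hm
        rw [Subgroup.mem_comap, hm1]
        exact one_mem _
      · intro hcontra
        obtain ⟨z, hz⟩ := QuotientGroup.mk'_surjective M c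
        have hzK : z ∈ Subgroup.comap π (Subgroup.zpowers c) := by
          rw [Subgroup.mem_comap, hz]
          exact Subgroup.mem_zpowers _
        rw [← hcontra] at hzK
        have hc1 : c = 1 := by rw [← hz]; exact (QuotientGroup.eq_one_iff z).mpr hzK
        rw [hc1, orderOf_one] at hc
        exact hp.one_lt.ne' hc.symm
    have hKtop : Subgroup.comap π (Subgroup.zpowers c) = ⊤ := hM.2 _ hMK
    have hztop : Subgroup.zpowers c = ⊤ := by
      have := congrArg (Subgroup.map π) hKtop
      rwa [Subgroup.map_comap_eq_self_of_surjective (QuotientGroup.mk'_surjective M),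
        Subgroup.map_top_of_surjective π (QuotientGroup.mk'_surjective M)] at this
    have hcardQ : Nat.card (Gf n q ⧸ M) = p := by
      rw [← Subgroup.card_top, ← hztop, Nat.card_zpowers, hc]
    haveI : IsCyclic (Gf n q ⧸ M) := isCyclic_of_prime_card hcardQ
    letI : CommGroup (Gf n q ⧸ M) := IsCyclic.commGroup
    set A := π g with hA
    set B := π h with hB
    have hxM : π x = 1 := (QuotientGroup.eq_one_iff x).mpr
      (hHM (Subgroup.subset_closure (Set.mem_insert _ _)))
    have hyM : π y = 1 := (QuotientGroup.eq_one_iff y).mpr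
      (hHM (Subgroup.subset_closure (Set.mem_insert_of_mem _ rfl)))
    have hxAB : A ^ u * B ^ s = 1 := by
      rw [hA, hB, ← map_zpow, ← map_zpow, ← map_mul, ← hx, hxM]
    have hyAB : A ^ v * B ^ t = 1 := by
      rw [hA, hB, ← map_zpow, ← map_zpow, ← map_mul, ← hy, hyM]
    have f1 : A ^ (u * t) * B ^ (s * t) = 1 := by
      have := congrArg (· ^ t) hxAB
      simpa [mul_zpow, ← zpow_mul] using this
    have f2 : A ^ (v * s) * B ^ (t * s) = 1 := by
      have := congrArg (· ^ s) hyAB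
      simpa [mul_zpow, ← zpow_mul] using this
    have f3 : A ^ (v * u) * B ^ (t * u) = 1 := by
      have := congrArg (· ^ u) hyAB
      simpa [mul_zpow, ← zpow_mul] using this
    have f4 : A ^ (u * v) * B ^ (s * v) = 1 := by
      have := congrArg (· ^ v) hxAB
      simpa [mul_zpow, ← zpow_mul] using this
    have g1 : A ^ (u * t - v * s) = 1 := by
      rw [zpow_sub, eq_inv_of_mul_eq_one_left f1, eq_inv_of_mul_eq_one_left f2,
        inv_inv, mul_comm t s, inv_mul_cancel]
    have g2 : B ^ (u * t - v * s) = 1 := by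
      have e3 : B ^ (t * u) = (A ^ (v * u))⁻¹ := eq_inv_of_mul_eq_one_right f3
      have e4 : B ^ (s * v) = (A ^ (u * v))⁻¹ := eq_inv_of_mul_eq_one_right f4
      rw [zpow_sub, mul_comm u t, mul_comm v s, e3, e4, inv_inv, mul_comm v u,
        inv_mul_cancel]
    have hA1 : A = 1 := by
      have hordA : orderOf A ∣ p := orderOf_dvd_of_pow_eq_one
        (by rw [← hcardQ]; exact pow_card_eq_one')
      rcases hp.eq_one_or_self_of_dvd _ hordA with h1 | h1
      · exact orderOf_eq_one_iff.mp h1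
      · exfalso
        apply hdet
        have hdd : (orderOf A : ℤ) ∣ u * t - v * s := orderOf_dvd_iff_zpow_eq_one.mpr g1
        rwa [h1] at hdd
    have hB1 : B = 1 := by
      have hordB : orderOf B ∣ p := orderOf_dvd_of_pow_eq_one
        (by rw [← hcardQ]; exact pow_card_eq_one')
      rcases hp.eq_one_or_self_of_dvd _ hordB with h1 | h1
      · exact orderOf_eq_one_iff.mp h1
      · exfalso
        apply hdet
        have hdd : (orderOf B : ℤ) ∣ u * t - v * s := orderOf_dvd_iff_zpow_eq_one.mpr g2
        rwa [h1] at hdd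
    have hcone : c = 1 := by
      obtain ⟨z, hz⟩ := QuotientGroup.mk'_surjective M c
      obtain ⟨i, j, hij⟩ := normal_form hn0 z
      rw [← hz, hij, map_mul, map_pow, map_pow, ← hg, ← hh, ← hA, ← hB, hA1, hB1,
        one_pow, one_pow, mul_one]
    rw [hcone, orderOf_one] at hc
    exact hp.one_lt.ne' hc.symm
end

section
/- Let p be an odd prime, e ≥ 1, n = p^e, 1 ≤ f ≤ e. Suppose u, v, w are integers with u + v + w ≡ 0 (mod n), and at least one of u, v, w is not divisible by p. Then there exist integers s_0, s_1, s_∞ with s_0·q^(v+w) + s_1·q^w + s_∞ ≡ 0 (mod n) (where q = 1 + p^f) such that the corresponding pair x = g^u h^(s_0), y = g^v h^(s_1) generates G_f, i.e. u·s_1 - v·s_0 ≢ 0 (mod p). -/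
lemma gGen_pow_n (n q : ℕ) : gGen n q ^ n = 1 := by
  have h : (FreeGroup.of 0 ^ n : FreeGroup (Fin 2)) ∈ Subgroup.normalClosure (fermatRels n q) :=
    Subgroup.subset_normalClosure (by left; rfl)
  show PresentedGroup.mk (fermatRels n q) (FreeGroup.of 0) ^ n = 1
  rw [← map_pow]
  exact (QuotientGroup.eq_one_iff _).2 h

lemma mem_of_pow_coprime {G : Type*} [Group G] {g : G} {H : Subgroup G} {n u : ℕ}
    (hg : g ^ n = 1) (hc : Nat.Coprime u n) (hm : g ^ u ∈ H) : g ∈ H := by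
  obtain ⟨a, b, hab⟩ := Nat.isCoprime_iff_coprime.2 hc
  have hrw : g = (g ^ u) ^ a * (g ^ n) ^ b := by
    rw [← zpow_natCast g u, ← zpow_natCast g n, ← zpow_mul, ← zpow_mul, ← zpow_add,
      mul_comm (u : ℤ) a, mul_comm (n : ℤ) b, hab, zpow_one]
  rw [hrw, hg, one_zpow, mul_one]
  exact Subgroup.zpow_mem H hm a

lemma closure_gh (n q : ℕ) {H : Subgroup (Gf n q)}
    (hg : gGen n q ∈ H) (hh : hGen n q ∈ H) : H = ⊤ := by
  rw [eq_top_iff, ← PresentedGroup.closure_range_of (fermatRels n q), Subgroup.closure_le]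
  rintro x ⟨i, rfl⟩
  fin_cases i
  · exact hg
  · exact hh

lemma closure_aux (n q a b : ℕ) (hc : Nat.Coprime a n) :
    Subgroup.closure {gGen n q ^ a * hGen n q ^ (0 : ℤ), gGen n q ^ b * hGen n q ^ (1 : ℤ)}
      = ⊤ := by
  set H := Subgroup.closure
    {gGen n q ^ a * hGen n q ^ (0 : ℤ), gGen n q ^ b * hGen n q ^ (1 : ℤ)} with hH
  have h1 : gGen n q ^ a * hGen n q ^ (0 : ℤ) ∈ H :=
    Subgroup.subset_closure (Set.mem_insert _ _)
  have h2 : gGen n q ^ b * hGen n q ^ (1 : ℤ) ∈ H :=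
    Subgroup.subset_closure (Set.mem_insert_of_mem _ rfl)
  rw [zpow_zero, mul_one] at h1
  rw [zpow_one] at h2
  have hg : gGen n q ∈ H := mem_of_pow_coprime (gGen_pow_n n q) hc h1
  have hh : hGen n q ∈ H := by
    have := H.mul_mem (H.inv_mem (H.pow_mem hg b)) h2
    rwa [inv_mul_cancel_left] at this
  exact closure_gh n q hg hh

theorem stmt13 (p e f : ℕ) (hp : p.Prime) (hodd : Odd p) (he : 1 ≤ e)
    (hf1 : 1 ≤ f) (hfe : f ≤ e) (n : ℕ) (hn : n = p ^ e) (q : ℕ) (hq : q = 1 + p ^ f)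
    (u v w : ℕ) (hsum : n ∣ u + v + w)
    (hnd : ¬ p ∣ u ∨ ¬ p ∣ v ∨ ¬ p ∣ w) :
    ∃ s₀ s₁ s₂ : ℤ,
      ((n : ℤ) ∣ s₀ * (q : ℤ) ^ (v + w) + s₁ * (q : ℤ) ^ w + s₂) ∧
      ¬ (p : ℤ) ∣ ((u : ℤ) * s₁ - (v : ℤ) * s₀) ∧
      Subgroup.closure {gGen n q ^ u * hGen n q ^ s₀, gGen n q ^ v * hGen n q ^ s₁} = ⊤ := by
  have hpn : p ∣ n := hn ▸ dvd_pow_self p (by omega)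
  have hcase : ¬ p ∣ u ∨ ¬ p ∣ v := by
    rcases hnd with h | h | h
    · exact Or.inl h
    · exact Or.inr h
    · by_contra hc
      push_neg at hc
      have huvw : p ∣ u + v + w := hpn.trans hsum
      exact h ((Nat.dvd_add_right (hc.1.add hc.2)).mp huvw)
  rcases hcase with h | h
  · refine ⟨0, 1, -(0 * (q : ℤ) ^ (v + w) + 1 * (q : ℤ) ^ w), by ring_nf; exact dvd_zero _, ?_, ?_⟩
    · simpa using fun hd => h (Int.natCast_dvd_natCast.mp hd)
    · exact closure_aux n q u v
        (by rw [hn]; exact ((hp.coprime_iff_not_dvd.2 h).symm.pow_right e))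
  · refine ⟨1, 0, -(1 * (q : ℤ) ^ (v + w) + 0 * (q : ℤ) ^ w), by ring_nf; exact dvd_zero _, ?_, ?_⟩
    · simpa using fun hd => h (Int.natCast_dvd_natCast.mp hd)
    · rw [Set.pair_comm]
      exact closure_aux n q v u
        (by rw [hn]; exact ((hp.coprime_iff_not_dvd.2 h).symm.pow_right e))
end

section
/- Let p be an odd prime, e ≥ 1, n = p^e, 1 ≤ f ≤ e. If x, y ∈ G_f generate G_f, then x, y, and xy all have order exactly n. -/
/-!
Every element of `G_f` is `g^u h^s`, and `(g^u h^s)^m = g^(um) h^(s σ)` with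
`σ = ∑_{i<m} q^(ui)`. Both generators have order exactly `n` (`g` maps onto a generator of
`ℤ/n`, `h` acts on `ℤ/n` as translation by `1`), so this power is trivial iff `n ∣ um` and
`n ∣ sσ`. For odd `p` and `x ≡ 1 (mod p)` one has `∑_{i<p^t} x^i ≡ p^t (mod p^(t+1))`; hence
`G_f` has exponent `n`, and `g^u h^s` has order `n` unless `p` divides both `u` and `s`, i.e.
unless it lies in the kernel of `G_f → (ℤ/p)²`. A generating pair maps onto `(ℤ/p)²`, which is
not cyclic, so none of `x`, `y`, `xy` lies in that kernel.
-/

open Finset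

theorem geom_sum_range_mul_s14 {R : Type*} [CommSemiring R] (x : R) (a : ℕ) :
    ∀ b : ℕ, ∑ i ∈ range (a * b), x ^ i = (∑ i ∈ range a, x ^ i) * ∑ j ∈ range b, (x ^ a) ^ j
  | 0 => by simp
  | b + 1 => by
    rw [Nat.mul_succ, sum_range_add, geom_sum_range_mul_s14 x a b, sum_range_succ, mul_add,
      ← pow_mul]
    congr 1
    rw [sum_mul]
    simp only [pow_add, mul_comm]

namespace Nat

theorem geom_sum_modEq_sq {p x : ℕ} (hp : Odd p) (hx : x ≡ 1 [MOD p]) :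
    ∑ i ∈ range p, x ^ i ≡ p [MOD p ^ 2] := by
  obtain ⟨b, hb⟩ := modEq_iff_dvd.mp hx.symm
  have h := odd_sq_dvd_geom_sum₂_sub (R := ℤ) 1 b hp
  simp only [one_pow, mul_one, ← hb, Nat.cast_one, add_sub_cancel] at h
  refine (modEq_iff_dvd.mpr ?_).symm
  push_cast
  exact h

theorem geom_sum_pow_modEq_pow_succ {p x : ℕ} (hp : Odd p) (hx : x ≡ 1 [MOD p]) :
    ∀ t : ℕ, ∑ i ∈ range (p ^ t), x ^ i ≡ p ^ t [MOD p ^ (t + 1)]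
  | 0 => by simp [Nat.ModEq]
  | t + 1 => by
    have hA := geom_sum_pow_modEq_pow_succ hp hx t
    have hB := geom_sum_modEq_sq hp (by simpa using hx.pow (p ^ t))
    have hpB : p ∣ ∑ j ∈ range p, (x ^ p ^ t) ^ j :=
      (hB.dvd_iff (dvd_pow_self p two_ne_zero)).mpr dvd_rfl
    rw [pow_succ p t, geom_sum_range_mul_s14]
    calc _ ≡ p ^ t * ∑ j ∈ range p, (x ^ p ^ t) ^ j [MOD p ^ (t + 1 + 1)] :=
          (hA.mul_right' _).of_dvd (by rw [pow_succ]; exact mul_dvd_mul_left _ hpB)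
      _ ≡ p ^ t * p [MOD p ^ (t + 1 + 1)] := (hB.mul_left' _).of_dvd (by rw [← pow_add])

theorem pow_pow_modEq_one {p x : ℕ} (hp : Odd p) (hx : x ≡ 1 [MOD p]) (t : ℕ) :
    x ^ p ^ t ≡ 1 [MOD p ^ (t + 1)] := by
  have hsum : p ^ t ∣ ∑ i ∈ range (p ^ t), x ^ i :=
    ((geom_sum_pow_modEq_pow_succ hp hx t).dvd_iff (pow_dvd_pow p t.le_succ)).mpr dvd_rfl
  refine (modEq_iff_dvd.mpr ?_).symm
  push_cast
  rw [← geom_sum_mul, pow_succ]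
  exact mul_dvd_mul (by exact_mod_cast hsum) (modEq_iff_dvd.mp hx.symm)

end Nat

theorem map_ne_one_of_closure_pair_eq_top {G H : Type*} [Group G] [Group H] {φ : G →* H}
    (hφ : Function.Surjective φ) (hH : ¬IsCyclic H) {x y : G}
    (hxy : Subgroup.closure {x, y} = ⊤) : φ x ≠ 1 ∧ φ y ≠ 1 ∧ φ (x * y) ≠ 1 := by
  have htop : Subgroup.closure {φ x, φ y} = ⊤ := by
    rw [← Set.image_pair, ← MonoidHom.map_closure, hxy, ← MonoidHom.range_eq_map,
      MonoidHom.range_eq_top.mpr hφ]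
  have cyclic_of_mem {a b : H} (hab : Subgroup.closure {a, b} = ⊤)
      (ha : a ∈ Subgroup.zpowers b) : IsCyclic H :=
    isCyclic_iff_exists_zpowers_eq_top.mpr ⟨b, top_le_iff.mp <| hab ▸ (Subgroup.closure_le _).mpr
      (Set.insert_subset ha (Set.singleton_subset_iff.mpr (Subgroup.mem_zpowers b)))⟩
  refine ⟨fun h => hH ?_, fun h => hH ?_, fun h => hH ?_⟩
  · exact cyclic_of_mem htop (h ▸ one_mem _)
  · exact cyclic_of_mem (Set.pair_comm (φ x) (φ y) ▸ htop) (h ▸ one_mem _)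
  · rw [map_mul, mul_eq_one_iff_eq_inv] at h
    exact cyclic_of_mem htop (h ▸ inv_mem (Subgroup.mem_zpowers _))

theorem not_isCyclic_multiplicative_zmod_prod {p : ℕ} (hp : p.Prime) :
    ¬IsCyclic (Multiplicative (ZMod p × ZMod p)) := by
  rw [isCyclic_multiplicative_iff, AddGroup.isAddCyclic_prod_iff, Nat.card_zmod, Nat.coprime_self]
  exact fun h => hp.ne_one h.2.2

namespace Gf

variable {n q : ℕ}

theorem gGen_pow_n : gGen n q ^ n = 1 := by
  simpa [gGen, PresentedGroup.of] using
    PresentedGroup.one_of_mem (rels := fermatRels n q) (Set.mem_insert _ _)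

theorem hGen_pow_n : hGen n q ^ n = 1 := by
  simpa [hGen, PresentedGroup.of] using PresentedGroup.one_of_mem (rels := fermatRels n q)
    (Set.mem_insert_of_mem _ (Set.mem_insert _ _))

theorem gGen_inv_mul_hGen_mul_gGen : (gGen n q)⁻¹ * hGen n q * gGen n q = hGen n q ^ q := by
  have := PresentedGroup.one_of_mem (rels := fermatRels n q)
    (Set.mem_insert_of_mem _ (Set.mem_insert_of_mem _ rfl))
  simpa [gGen, hGen, PresentedGroup.of, mul_inv_eq_one] using this

theorem hGen_pow_mul_gGen (a : ℕ) : hGen n q ^ a * gGen n q = gGen n q * hGen n q ^ (a * q) := by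
  have h := conj_pow (a := (gGen n q)⁻¹) (b := hGen n q) (i := a)
  rw [inv_inv, gGen_inv_mul_hGen_mul_gGen, ← pow_mul'] at h
  rw [h]
  group

theorem hGen_pow_mul_gGen_pow (a v : ℕ) :
    hGen n q ^ a * gGen n q ^ v = gGen n q ^ v * hGen n q ^ (a * q ^ v) := by
  induction v generalizing a with
  | zero => simp
  | succ v ih =>
    rw [pow_succ, ← mul_assoc, ih, mul_assoc, hGen_pow_mul_gGen, ← mul_assoc, ← pow_succ,
      pow_succ q, mul_assoc]

theorem exists_eq_gGen_pow_mul_hGen_pow (hn : n ≠ 0) (z : Gf n q) :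
    ∃ u s : ℕ, z = gGen n q ^ u * hGen n q ^ s := by
  have hg : (gGen n q)⁻¹ = gGen n q ^ (n - 1) :=
    inv_eq_of_mul_eq_one_right ((mul_pow_sub_one hn _).trans gGen_pow_n)
  have hh : (hGen n q)⁻¹ = hGen n q ^ (n - 1) :=
    inv_eq_of_mul_eq_one_right ((mul_pow_sub_one hn _).trans hGen_pow_n)
  have hz : z ∈ Subgroup.closure (Set.range PresentedGroup.of) :=
    PresentedGroup.closure_range_of _ ▸ Subgroup.mem_top z
  induction hz using Subgroup.closure_induction'' with
  | mem _ hx =>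
    obtain ⟨i, rfl⟩ := hx
    fin_cases i
    exacts [⟨1, 0, by simp [gGen]⟩, ⟨0, 1, by simp [hGen]⟩]
  | inv_mem _ hx =>
    obtain ⟨i, rfl⟩ := hx
    fin_cases i
    exacts [⟨n - 1, 0, by rw [pow_zero, mul_one]; exact hg⟩,
      ⟨0, n - 1, by rw [pow_zero, one_mul]; exact hh⟩]
  | one => exact ⟨0, 0, by simp⟩
  | mul _ _ _ _ hx hy =>
    obtain ⟨u, s, rfl⟩ := hx
    obtain ⟨v, t, rfl⟩ := hy
    refine ⟨u + v, s * q ^ v + t, ?_⟩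
    rw [mul_assoc, ← mul_assoc (hGen n q ^ s), hGen_pow_mul_gGen_pow, pow_add, pow_add]
    group

theorem gGen_pow_mul_hGen_pow_pow (u s m : ℕ) :
    (gGen n q ^ u * hGen n q ^ s) ^ m =
      gGen n q ^ (u * m) * hGen n q ^ (s * ∑ i ∈ range m, (q ^ u) ^ i) := by
  induction m with
  | zero => simp
  | succ m ih =>
    rw [pow_succ, ih, mul_assoc, ← mul_assoc (hGen n q ^ _), hGen_pow_mul_gGen_pow,
      geom_sum_succ, mul_assoc, ← pow_add, ← mul_assoc, ← pow_add]
    ring_nf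

def lift {H : Type*} [Group H] (a b : H) (ha : a ^ n = 1) (hb : b ^ n = 1)
    (hab : a⁻¹ * b * a = b ^ q) : Gf n q →* H :=
  PresentedGroup.toGroup (f := ![a, b]) <| by
    rintro r (rfl | rfl | rfl) <;> simpa [mul_inv_eq_one]

section lift

variable {H : Type*} [Group H] {a b : H} {ha : a ^ n = 1} {hb : b ^ n = 1}
  {hab : a⁻¹ * b * a = b ^ q}

@[simp] theorem lift_gGen : lift a b ha hb hab (gGen n q) = a := PresentedGroup.toGroup.of _

@[simp] theorem lift_hGen : lift a b ha hb hab (hGen n q) = b := PresentedGroup.toGroup.of _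

end lift

def toZMod : Gf n q →* Multiplicative (ZMod n) :=
  lift (.ofAdd 1) 1 (by simp [← ofAdd_nsmul]) (one_pow n) (by simp)

theorem toZMod_gGen_pow_mul_hGen_pow (u s : ℕ) :
    toZMod (gGen n q ^ u * hGen n q ^ s) = .ofAdd (u : ZMod n) := by
  simp [toZMod, ← ofAdd_nsmul]

theorem orderOf_gGen : orderOf (gGen n q) = n := by
  refine Nat.dvd_antisymm (orderOf_dvd_of_pow_eq_one gGen_pow_n) ?_
  have h := congrArg toZMod (pow_orderOf_eq_one (gGen n q))
  simp only [toZMod, map_pow, lift_gGen, map_one, ← ofAdd_nsmul, ofAdd_eq_one, nsmul_one] at h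
  exact (ZMod.natCast_eq_zero_iff _ _).mp h

def affineRep (hn : n ≠ 0) (hq : (q : ZMod n) ^ n = 1) : Gf n q →* Equiv.Perm (ZMod n) :=
  lift (MulAction.toPermHom _ _ (Units.ofPowEqOne _ n hq hn)⁻¹) (Equiv.addRight 1)
    (by rw [← map_pow, inv_pow, Units.pow_ofPowEqOne, inv_one, map_one])
    (by rw [Equiv.nsmul_addRight]; ext; simp)
    (by
      ext x
      simp [Equiv.Perm.inv_def, Equiv.nsmul_addRight, smul_add, Units.smul_def]
      rw [← mul_assoc, mul_pow_sub_one hn, hq, one_mul])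

theorem orderOf_hGen (hn : n ≠ 0) (hq : (q : ZMod n) ^ n = 1) : orderOf (hGen n q) = n := by
  refine Nat.dvd_antisymm (orderOf_dvd_of_pow_eq_one hGen_pow_n) ?_
  have h := congrArg (fun σ => affineRep hn hq σ 0) (pow_orderOf_eq_one (hGen n q))
  simp only [affineRep, map_pow, lift_hGen, Equiv.nsmul_addRight, Equiv.coe_addRight, map_one,
    Equiv.Perm.one_apply, zero_add, nsmul_one] at h
  exact (ZMod.natCast_eq_zero_iff _ _).mp h

theorem gGen_pow_mul_hGen_pow_pow_eq_one_iff (hn : n ≠ 0) (hq : (q : ZMod n) ^ n = 1)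
    (u s m : ℕ) : (gGen n q ^ u * hGen n q ^ s) ^ m = 1 ↔
      n ∣ u * m ∧ n ∣ s * ∑ i ∈ range m, (q ^ u) ^ i := by
  have hg (k : ℕ) : gGen n q ^ k = 1 ↔ n ∣ k := by
    rw [← orderOf_dvd_iff_pow_eq_one, orderOf_gGen]
  have hh (k : ℕ) : hGen n q ^ k = 1 ↔ n ∣ k := by
    rw [← orderOf_dvd_iff_pow_eq_one, orderOf_hGen hn hq]
  rw [gGen_pow_mul_hGen_pow_pow, ← hg, ← hh]
  constructor
  · intro h
    have hu : gGen n q ^ (u * m) = 1 := by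
      have := congrArg toZMod h
      rw [toZMod_gGen_pow_mul_hGen_pow, map_one, ofAdd_eq_one] at this
      exact (hg _).mpr ((ZMod.natCast_eq_zero_iff _ _).mp this)
    exact ⟨hu, by rwa [hu, one_mul] at h⟩
  · rintro ⟨hu, hs⟩
    rw [hu, hs, one_mul]

def toZModProd (p : ℕ) (hn : p ∣ n) (hq : q ≡ 1 [MOD p]) :
    Gf n q →* Multiplicative (ZMod p × ZMod p) :=
  lift (.ofAdd (1, 0)) (.ofAdd (0, 1))
    (by simp [← ofAdd_nsmul, (ZMod.natCast_eq_zero_iff n p).mpr hn])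
    (by simp [← ofAdd_nsmul, (ZMod.natCast_eq_zero_iff n p).mpr hn])
    (by simp [← ofAdd_nsmul, (ZMod.natCast_eq_natCast_iff q 1 p).mpr hq])

theorem toZModProd_gGen_pow_mul_hGen_pow {p : ℕ} {hn : p ∣ n} {hq : q ≡ 1 [MOD p]} (u s : ℕ) :
    toZModProd p hn hq (gGen n q ^ u * hGen n q ^ s) = .ofAdd ((u : ZMod p), (s : ZMod p)) := by
  simp [toZModProd, ← ofAdd_nsmul, ← ofAdd_add]

theorem toZModProd_surjective {p : ℕ} [NeZero p] (hn : p ∣ n) (hq : q ≡ 1 [MOD p]) :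
    Function.Surjective (toZModProd p hn hq) := fun c =>
  ⟨gGen n q ^ c.toAdd.1.val * hGen n q ^ c.toAdd.2.val, by
    simp [toZModProd_gGen_pow_mul_hGen_pow]⟩

theorem orderOf_eq_of_toZModProd_ne_one {p e : ℕ} (hp : p.Prime) (hodd : Odd p)
    (hq : q ≡ 1 [MOD p]) {z : Gf (p ^ (e + 1)) q}
    (hz : toZModProd p (dvd_pow_self p e.succ_ne_zero) hq z ≠ 1) : orderOf z = p ^ (e + 1) := by
  have := Fact.mk hp
  have hn : p ^ (e + 1) ≠ 0 := pow_ne_zero _ hp.ne_zero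
  have hqn : (q : ZMod (p ^ (e + 1))) ^ p ^ (e + 1) = 1 := by
    exact_mod_cast (ZMod.natCast_eq_natCast_iff _ 1 _).mpr
      ((Nat.pow_pow_modEq_one hodd hq (e + 1)).of_dvd (pow_dvd_pow p (by omega)))
  obtain ⟨u, s, rfl⟩ := exists_eq_gGen_pow_mul_hGen_pow hn z
  have hus : ¬(p ∣ u ∧ p ∣ s) := by
    simpa [toZModProd_gGen_pow_mul_hGen_pow, Prod.ext_iff, ZMod.natCast_eq_zero_iff] using hz
  have hσ := Nat.geom_sum_pow_modEq_pow_succ hodd (by simpa using hq.pow u)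
  have hdvd (a : ℕ) : p ^ (e + 1) ∣ a * p ^ e ↔ p ∣ a := by
    rw [pow_succ']; exact Nat.mul_dvd_mul_iff_right (pow_pos hp.pos e)
  refine orderOf_eq_prime_pow ?_ ?_
  · rwa [gGen_pow_mul_hGen_pow_pow_eq_one_iff hn hqn, hdvd, ((hσ e).mul_left s).dvd_iff dvd_rfl,
      hdvd]
  · rw [gGen_pow_mul_hGen_pow_pow_eq_one_iff hn hqn]
    exact ⟨dvd_mul_left _ _, dvd_mul_of_dvd_right
      (((hσ (e + 1)).dvd_iff (pow_dvd_pow p (e + 1).le_succ)).mpr dvd_rfl) s⟩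

end Gf

theorem stmt14_general (p e f : ℕ) (hp : p.Prime) (hodd : Odd p) (he : 1 ≤ e)
    (hf1 : 1 ≤ f) (n : ℕ) (hn : n = p ^ e) (q : ℕ) (hq : q = 1 + p ^ f)
    (x y : Gf n q) (hgen : Subgroup.closure {x, y} = ⊤) :
    orderOf x = n ∧ orderOf y = n ∧ orderOf (x * y) = n := by
  obtain ⟨e, rfl⟩ : ∃ e', e = e' + 1 := ⟨e - 1, by omega⟩
  have hq1 : q ≡ 1 [MOD p] := by
    rw [hq]
    exact (Nat.modEq_zero_iff_dvd.mpr (dvd_pow_self p (by omega))).add_left 1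
  subst hn
  have : NeZero p := ⟨hp.ne_zero⟩
  obtain ⟨hx, hy, hxy⟩ := map_ne_one_of_closure_pair_eq_top
    (Gf.toZModProd_surjective (dvd_pow_self p e.succ_ne_zero) hq1)
    (not_isCyclic_multiplicative_zmod_prod hp) hgen
  exact ⟨Gf.orderOf_eq_of_toZModProd_ne_one hp hodd hq1 hx,
    Gf.orderOf_eq_of_toZModProd_ne_one hp hodd hq1 hy,
    Gf.orderOf_eq_of_toZModProd_ne_one hp hodd hq1 hxy⟩

theorem stmt14 (p e f : ℕ) (hp : p.Prime) (hodd : Odd p) (he : 1 ≤ e)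
    (hf1 : 1 ≤ f) (hfe : f ≤ e) (n : ℕ) (hn : n = p ^ e) (q : ℕ) (hq : q = 1 + p ^ f)
    (x y : Gf n q) (hgen : Subgroup.closure {x, y} = ⊤) :
    orderOf x = n ∧ orderOf y = n ∧ orderOf (x * y) = n :=
  stmt14_general p e f hp hodd he hf1 n hn q hq x y hgen
end
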